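/- arXiv:1901.04073 — 2 statements merged into one kernel-verified Lean document; each statement's English description precedes it below -/
import Mathlib

section
/- Let K be a field of characteristic 0 and let p, r ∈ K[X] be monic polynomials with deg p = 8 and deg r = 5. Then the polynomial p·r + X·(3p·r' - 2p'·r) has degree at most 12 (the degree-13 leading terms cancel). -/
open Polynomial

theorem stmt_11 {K : Type*} [Field K] [CharZero K] (p r : K[X])
    (hp : p.Monic) (hr : r.Monic) (hpd : p.natDegree = 8) (hrd : r.natDegree = 5) :
    (p * r + X * (3 * p * derivative r - 2 * derivative p * r)).degree ≤ 12 := by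
  have hdp : (derivative p).natDegree = 7 := by
    have := degree_derivative_eq p (by omega)
    rw [hpd] at this
    exact natDegree_eq_of_degree_eq_some this
  have hdr : (derivative r).natDegree = 4 := by
    have := degree_derivative_eq r (by omega)
    rw [hrd] at this
    exact natDegree_eq_of_degree_eq_some this
  have hlp : p.leadingCoeff = 1 := hp
  have hlr : r.leadingCoeff = 1 := hr
  have hldp : (derivative p).leadingCoeff = 8 := by
    rw [leadingCoeff, hdp, coeff_derivative]
    have : p.coeff (7 + 1) = 1 := by
      have := hp.coeff_natDegree
      rwa [hpd] at this
    rw [this]; norm_num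
  have hldr : (derivative r).leadingCoeff = 5 := by
    rw [leadingCoeff, hdr, coeff_derivative]
    have : r.coeff (4 + 1) = 1 := by
      have := hr.coeff_natDegree
      rwa [hrd] at this
    rw [this]; norm_num
  set F := p * r + X * (3 * p * derivative r - 2 * derivative p * r) with hF
  have h1 : (p * r).coeff 13 = 1 := by
    have := coeff_mul_degree_add_degree p r
    rwa [hpd, hrd, hlp, hlr, one_mul] at this
  have h2 : (p * derivative r).coeff 12 = 5 := by
    have := coeff_mul_degree_add_degree p (derivative r)
    rwa [hpd, hdr, hlp, hldr, one_mul] at this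
  have h3 : (derivative p * r).coeff 12 = 8 := by
    have := coeff_mul_degree_add_degree (derivative p) r
    rwa [hdp, hrd, hldp, hlr, mul_one] at this
  have hc13 : F.coeff 13 = 0 := by
    have h13 : (13 : ℕ) = 12 + 1 := rfl
    rw [hF, coeff_add, h13, coeff_X_mul, coeff_sub, mul_assoc, mul_assoc,
      coeff_ofNat_mul, coeff_ofNat_mul, h1, h2, h3]
    norm_num
  have hnd : F.natDegree ≤ 13 := by
    apply le_trans (natDegree_add_le _ _)
    simp only [max_le_iff]
    constructor
    · exact le_trans (natDegree_mul_le) (by rw [hpd, hrd])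
    · apply le_trans (natDegree_mul_le)
      have hsub : (3 * p * derivative r - 2 * derivative p * r).natDegree ≤ 12 := by
        apply le_trans (natDegree_sub_le _ _)
        simp only [max_le_iff]
        constructor
        · exact le_trans natDegree_mul_le (by
            have := natDegree_mul_le (p := (3 : K[X])) (q := p)
            simp only [natDegree_ofNat, hpd, zero_add] at this
            simp only [hdr]
            omega)
        · exact le_trans natDegree_mul_le (by
            have := natDegree_mul_le (p := (2 : K[X])) (q := derivative p)
            simp only [natDegree_ofNat, hdp, zero_add] at this
            simp only [hrd]
            omega)
      calc X.natDegree + (3 * p * derivative r - 2 * derivative p * r).natDegree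
          ≤ 1 + 12 := by
            have := natDegree_X_le (R := K)
            omega
        _ = 13 := rfl
  rw [degree_le_iff_coeff_zero]
  intro m hm
  have hm' : (12 : ℕ) < m := by exact_mod_cast hm
  rcases eq_or_lt_of_le (Nat.succ_le_of_lt hm') with h | h
  · rw [← h]; exact hc13
  · exact coeff_eq_zero_of_natDegree_lt (lt_of_le_of_lt hnd h)
end

section
/- Let p, r ∈ ℂ[X] be polynomials with formal derivatives p', r'. Define F: {(x₁,x₂) ∈ ℂ² : x₂ ≠ 0} → ℂ² by F(x₁,x₂) = (x₁³x₂⁸·p(w), x₁²x₂⁵·(x₁x₂³-1)·r(w)) where w = (x₁x₂³-1)³/x₂. Then the Jacobian determinant of F at (x₁,x₂) equals x₁⁴x₂¹²·( p(w)·r(w) + w·(3p(w)·r'(w) - 2p'(w)·r(w)) ). -/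
/-!
Write `y₁ = a · p(w)` and `y₂ = b · r(w)` (`kellerA`, `kellerB`, `kellerW` below). By the
product and chain rules the Jacobian of `(a · P(w), b · R(w))` splits as
`P R · J(a,b) + P R' · b J(a,w) + P' R · a J(w,b)`, and for the explicit factors one computes
`J(a,b) = x₁⁴x₂¹²`, `b J(a,w) = 3 w x₁⁴x₂¹²` and `a J(w,b) = -2 w x₁⁴x₂¹²`.
-/

open Polynomial

/-- The candidate Keller map of Section 3 of the paper. -/
noncomputable def y₁ (p : ℂ[X]) (x₁ x₂ : ℂ) : ℂ :=
  x₁ ^ 3 * x₂ ^ 8 * p.eval ((x₁ * x₂ ^ 3 - 1) ^ 3 / x₂)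

noncomputable def y₂ (r : ℂ[X]) (x₁ x₂ : ℂ) : ℂ :=
  x₁ ^ 2 * x₂ ^ 5 * (x₁ * x₂ ^ 3 - 1) * r.eval ((x₁ * x₂ ^ 3 - 1) ^ 3 / x₂)

section Jacobian

variable {𝕜 : Type*} [NontriviallyNormedField 𝕜]

noncomputable def jacobianDet (f g : 𝕜 → 𝕜 → 𝕜) (x₁ x₂ : 𝕜) : 𝕜 :=
  deriv (fun x => f x x₂) x₁ * deriv (fun y => g x₁ y) x₂
    - deriv (fun y => f x₁ y) x₂ * deriv (fun x => g x x₂) x₁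

theorem hasDerivAt_mul_eval_comp (P : 𝕜[X]) {a w : 𝕜 → 𝕜} {a' w' x : 𝕜}
    (ha : HasDerivAt a a' x) (hw : HasDerivAt w w' x) :
    HasDerivAt (fun t => a t * P.eval (w t))
      (a' * P.eval (w x) + a x * ((derivative P).eval (w x) * w')) x :=
  ha.mul ((P.hasDerivAt (w x)).comp x hw)

theorem jacobianDet_mul_eval_comp (P R : 𝕜[X]) {a b w : 𝕜 → 𝕜 → 𝕜} {x₁ x₂ : 𝕜}
    (ha₁ : DifferentiableAt 𝕜 (fun x => a x x₂) x₁) (ha₂ : DifferentiableAt 𝕜 (a x₁) x₂)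
    (hb₁ : DifferentiableAt 𝕜 (fun x => b x x₂) x₁) (hb₂ : DifferentiableAt 𝕜 (b x₁) x₂)
    (hw₁ : DifferentiableAt 𝕜 (fun x => w x x₂) x₁) (hw₂ : DifferentiableAt 𝕜 (w x₁) x₂) :
    jacobianDet (fun x y => a x y * P.eval (w x y)) (fun x y => b x y * R.eval (w x y)) x₁ x₂
      = P.eval (w x₁ x₂) * R.eval (w x₁ x₂) * jacobianDet a b x₁ x₂
        + P.eval (w x₁ x₂) * (derivative R).eval (w x₁ x₂) * (b x₁ x₂ * jacobianDet a w x₁ x₂)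
        + (derivative P).eval (w x₁ x₂) * R.eval (w x₁ x₂) * (a x₁ x₂ * jacobianDet w b x₁ x₂) := by
  simp only [jacobianDet,
    (hasDerivAt_mul_eval_comp P ha₁.hasDerivAt hw₁.hasDerivAt).deriv,
    (hasDerivAt_mul_eval_comp P ha₂.hasDerivAt hw₂.hasDerivAt).deriv,
    (hasDerivAt_mul_eval_comp R hb₁.hasDerivAt hw₁.hasDerivAt).deriv,
    (hasDerivAt_mul_eval_comp R hb₂.hasDerivAt hw₂.hasDerivAt).deriv]
  ring

end Jacobian

section KellerFactors

noncomputable def kellerA (x₁ x₂ : ℂ) : ℂ := x₁ ^ 3 * x₂ ^ 8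

noncomputable def kellerB (x₁ x₂ : ℂ) : ℂ := x₁ ^ 2 * x₂ ^ 5 * (x₁ * x₂ ^ 3 - 1)

noncomputable def kellerW (x₁ x₂ : ℂ) : ℂ := (x₁ * x₂ ^ 3 - 1) ^ 3 / x₂

variable (x₁ x₂ : ℂ)

theorem hasDerivAt_kellerA_fst :
    HasDerivAt (fun x => kellerA x x₂) (3 * x₁ ^ 2 * x₂ ^ 8) x₁ :=
  ((hasDerivAt_pow 3 x₁).mul_const (x₂ ^ 8)).congr_deriv (by push_cast; ring)

theorem hasDerivAt_kellerA_snd :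
    HasDerivAt (fun y => kellerA x₁ y) (8 * x₁ ^ 3 * x₂ ^ 7) x₂ :=
  ((hasDerivAt_pow 8 x₂).const_mul (x₁ ^ 3)).congr_deriv (by push_cast; ring)

theorem hasDerivAt_kellerB_fst :
    HasDerivAt (fun x => kellerB x x₂)
      (2 * x₁ * x₂ ^ 5 * (x₁ * x₂ ^ 3 - 1) + x₁ ^ 2 * x₂ ^ 8) x₁ :=
  (((hasDerivAt_pow 2 x₁).mul_const (x₂ ^ 5)).mul
    (((hasDerivAt_id' x₁).mul_const (x₂ ^ 3)).sub_const 1)).congr_deriv (by push_cast; ring)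

theorem hasDerivAt_kellerB_snd :
    HasDerivAt (fun y => kellerB x₁ y)
      (5 * x₁ ^ 2 * x₂ ^ 4 * (x₁ * x₂ ^ 3 - 1) + 3 * x₁ ^ 3 * x₂ ^ 7) x₂ :=
  (((hasDerivAt_pow 5 x₂).const_mul (x₁ ^ 2)).mul
    (((hasDerivAt_pow 3 x₂).const_mul x₁).sub_const 1)).congr_deriv (by push_cast; ring)

theorem hasDerivAt_kellerW_fst :
    HasDerivAt (fun x => kellerW x x₂) (3 * (x₁ * x₂ ^ 3 - 1) ^ 2 * x₂ ^ 2) x₁ :=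
  ((((hasDerivAt_id' x₁).mul_const (x₂ ^ 3)).sub_const 1).fun_pow 3).div_const x₂
    |>.congr_deriv (by push_cast; field_simp)

theorem hasDerivAt_kellerW_snd (hx₂ : x₂ ≠ 0) :
    HasDerivAt (fun y => kellerW x₁ y)
      ((9 * x₁ * x₂ ^ 3 * (x₁ * x₂ ^ 3 - 1) ^ 2 - (x₁ * x₂ ^ 3 - 1) ^ 3) / x₂ ^ 2) x₂ :=
  ((((hasDerivAt_pow 3 x₂).const_mul x₁).sub_const 1).fun_pow 3).fun_div (hasDerivAt_id' x₂) hx₂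
    |>.congr_deriv (by push_cast; ring)

theorem jacobianDet_kellerA_kellerB : jacobianDet kellerA kellerB x₁ x₂ = x₁ ^ 4 * x₂ ^ 12 := by
  rw [jacobianDet, (hasDerivAt_kellerA_fst x₁ x₂).deriv, (hasDerivAt_kellerA_snd x₁ x₂).deriv,
    (hasDerivAt_kellerB_fst x₁ x₂).deriv, (hasDerivAt_kellerB_snd x₁ x₂).deriv]
  ring

theorem kellerB_mul_jacobianDet_kellerA_kellerW (hx₂ : x₂ ≠ 0) :
    kellerB x₁ x₂ * jacobianDet kellerA kellerW x₁ x₂ = 3 * kellerW x₁ x₂ * (x₁ ^ 4 * x₂ ^ 12) := by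
  rw [jacobianDet, (hasDerivAt_kellerA_fst x₁ x₂).deriv, (hasDerivAt_kellerA_snd x₁ x₂).deriv,
    (hasDerivAt_kellerW_fst x₁ x₂).deriv, (hasDerivAt_kellerW_snd x₁ x₂ hx₂).deriv]
  unfold kellerB kellerW
  field_simp
  ring

theorem kellerA_mul_jacobianDet_kellerW_kellerB (hx₂ : x₂ ≠ 0) :
    kellerA x₁ x₂ * jacobianDet kellerW kellerB x₁ x₂
      = -2 * kellerW x₁ x₂ * (x₁ ^ 4 * x₂ ^ 12) := by
  rw [jacobianDet, (hasDerivAt_kellerW_fst x₁ x₂).deriv, (hasDerivAt_kellerW_snd x₁ x₂ hx₂).deriv,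
    (hasDerivAt_kellerB_fst x₁ x₂).deriv, (hasDerivAt_kellerB_snd x₁ x₂).deriv]
  unfold kellerA kellerW
  field_simp
  ring

end KellerFactors

theorem stmt_14 (p r : ℂ[X]) (x₁ x₂ : ℂ) (hx₂ : x₂ ≠ 0) :
    let w : ℂ := (x₁ * x₂ ^ 3 - 1) ^ 3 / x₂
    deriv (fun x => y₁ p x x₂) x₁ * deriv (fun y => y₂ r x₁ y) x₂
      - deriv (fun y => y₁ p x₁ y) x₂ * deriv (fun x => y₂ r x x₂) x₁
      = x₁ ^ 4 * x₂ ^ 12 *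
        (p.eval w * r.eval w
          + w * (3 * p.eval w * (derivative r).eval w - 2 * (derivative p).eval w * r.eval w)) := by
  intro w
  have hJ : jacobianDet (y₁ p) (y₂ r) x₁ x₂ = _ :=
    jacobianDet_mul_eval_comp (a := kellerA) (b := kellerB) (w := kellerW) p r
      (hasDerivAt_kellerA_fst x₁ x₂).differentiableAt
      (hasDerivAt_kellerA_snd x₁ x₂).differentiableAt
      (hasDerivAt_kellerB_fst x₁ x₂).differentiableAt
      (hasDerivAt_kellerB_snd x₁ x₂).differentiableAt
      (hasDerivAt_kellerW_fst x₁ x₂).differentiableAt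
      (hasDerivAt_kellerW_snd x₁ x₂ hx₂).differentiableAt
  rw [jacobianDet_kellerA_kellerB, kellerB_mul_jacobianDet_kellerA_kellerW x₁ x₂ hx₂,
    kellerA_mul_jacobianDet_kellerW_kellerB x₁ x₂ hx₂] at hJ
  refine hJ.trans ?_
  simp only [w, kellerW]
  ring
end
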